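/- Let I be a nonempty subset of {1,…,n} and let k be a nonnegative integer. Then P( C_I(σ) ≥ k ) ≤ H(I)^k / k!. -/

import Mathlib

open Finset

/-- The number of cycles of length `j` in the permutation `σ` of `{1,…,n}`
(fixed points count as cycles of length 1): the number of points whose
orbit under `σ` has size `j`, divided by `j`. -/
noncomputable def cycleCount {n : ℕ} (σ : Equiv.Perm (Fin n)) (j : ℕ) : ℕ :=
  (Finset.univ.filter fun x => Function.minimalPeriod (⇑σ) x = j).card / j

/-- The number of cycles of `σ` whose length lies in the set `I`. -/
noncomputable def cycleCountIn {n : ℕ} (σ : Equiv.Perm (Fin n)) (I : Finset ℕ) : ℕ :=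
  ∑ j ∈ I, cycleCount σ j

/-- The total number of cycles of `σ` (fixed points included as 1-cycles). -/
noncomputable def totalCycles {n : ℕ} (σ : Equiv.Perm (Fin n)) : ℕ :=
  cycleCountIn σ (Finset.Icc 1 n)

/-- Probability of an event under a uniformly random permutation of `{1,…,n}`. -/
noncomputable def permP (n : ℕ) (E : Equiv.Perm (Fin n) → Prop) : ℝ :=
  (Nat.card {σ : Equiv.Perm (Fin n) // E σ} : ℝ) / n.factorial

/-- Expectation of `f` under a uniformly random permutation of `{1,…,n}`. -/
noncomputable def permE (n : ℕ) (f : Equiv.Perm (Fin n) → ℝ) : ℝ :=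
  (∑ σ : Equiv.Perm (Fin n), f σ) / n.factorial

/-- `H(I) = ∑_{j ∈ I} 1/j`. -/
noncomputable def Hset (I : Finset ℕ) : ℝ := ∑ j ∈ I, (1 : ℝ) / j

/-- The harmonic sum `H_n = ∑_{i=1}^n 1/i`. -/
noncomputable def harm (n : ℕ) : ℝ := Hset (Finset.Icc 1 n)

/-!
Markov's inequality for the falling factorial gives `P(C_I ≥ k) ≤ E[(C_I)_k] / k!`, where
`(C_I)_k = k! * choose C_I k` counts `k`-tuples of distinct cycles with lengths in `I`. Replacing each cycle by any
of its points, weighted by the inverse of its length, turns `(C_I)_k` into a weighted count of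
`k`-tuples of points on pairwise distinct cycles. For a fixed tuple of lengths `j`, such pairs
`(σ, x)` are encoded injectively by listing the cycle of each `x i` starting from `x i`, followed
by the values of `σ` on the remaining points; this is an injective map into a set of embeddings
into `Fin n`, of which there are at most `n!`. Summing `∏ i, 1 / j i` over `j ∈ I^k` gives `H(I)^k`.
-/

open Function

theorem Nat.descFactorial_le_factorial (n k : ℕ) : n.descFactorial k ≤ n.factorial := by
  rcases le_or_gt k n with h | h
  · rw [← Nat.factorial_mul_descFactorial h]
    exact Nat.le_mul_of_pos_left _ (Nat.factorial_pos _)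
  · simp [Nat.descFactorial_eq_zero_iff_lt.2 h]

theorem Finset.card_filter_le_sum_choose {β : Type*} (s : Finset β) (f : β → ℕ) (k : ℕ) :
    #{a ∈ s | k ≤ f a} ≤ ∑ a ∈ s, (f a).choose k := by
  rw [card_filter]
  exact sum_le_sum fun a _ => by split_ifs with h; exacts [Nat.choose_pos h, Nat.zero_le _]

theorem Finset.card_filter_piFinset_injective {ι β : Type*} [Fintype ι] [DecidableEq ι]
    [DecidableEq β] (s : Finset β) :
    #{f ∈ Fintype.piFinset fun _ : ι => s | Injective f} = (#s).descFactorial (Fintype.card ι) := by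
  rw [← Fintype.card_coe s, ← Fintype.card_embedding_eq, ← card_univ, eq_comm]
  refine card_bij (fun e _ => Subtype.val ∘ e) (fun e _ => ?_) (fun e _ e' _ h => ?_) fun f hf => ?_
  · simpa using Subtype.val_injective.comp e.injective
  · exact DFunLike.ext _ _ fun i => Subtype.ext (congrFun h i)
  · simp only [mem_filter, Fintype.mem_piFinset] at hf
    exact ⟨⟨fun i => ⟨f i, hf.1 i⟩, fun i i' h => hf.2 (congrArg Subtype.val h)⟩, mem_univ _, rfl⟩

namespace Equiv.Perm

section Iterate

variable {α ι : Type*} (σ : Perm α)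

theorem sameCycle_iterate (x : α) (n : ℕ) : σ.SameCycle x (σ^[n] x) :=
  ⟨n, by rw [zpow_natCast, ← iterate_eq_pow]⟩

def cycleListing (x : ι → α) (j : ι → ℕ) : (Σ i, Fin (j i)) → α := fun q => σ^[q.2] (x q.1)

variable {σ} {x : ι → α} {j : ι → ℕ}

theorem apply_cycleListing (i : ι) (r : Fin (j i)) (hj : minimalPeriod σ (x i) = j i) :
    σ (σ.cycleListing x j ⟨i, r⟩) =
      σ.cycleListing x j ⟨i, ⟨(r + 1) % j i, Nat.mod_lt _ r.pos⟩⟩ := by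
  have h := iterate_mod_minimalPeriod_eq (f := σ) (x := x i) (n := r + 1)
  rw [hj] at h
  simp only [cycleListing, h, iterate_succ_apply']

end Iterate

section Finite

variable {α : Type*} [Finite α] (σ : Perm α)

theorem minimalPeriod_pos (x : α) : 0 < minimalPeriod σ x :=
  minimalPeriod_pos_of_mem_periodicPts (σ.injective.mem_periodicPts x)

theorem sameCycle_iff_exists_iterate_lt {x y : α} :
    σ.SameCycle x y ↔ ∃ n < minimalPeriod σ x, σ^[n] x = y := by
  refine ⟨fun h => ?_, fun ⟨n, _, hn⟩ => hn ▸ σ.sameCycle_iterate x n⟩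
  obtain ⟨n, rfl⟩ := h.exists_nat_pow_eq
  exact ⟨n % minimalPeriod σ x, Nat.mod_lt _ (σ.minimalPeriod_pos x),
    by rw [iterate_mod_minimalPeriod_eq, iterate_eq_pow]⟩

end Finite

variable {α : Type*} [Fintype α] [DecidableEq α] (σ : Perm α)

def orbitFinset (x : α) : Finset α := {y | σ.SameCycle x y}

@[simp]
theorem mem_orbitFinset {x y : α} : y ∈ σ.orbitFinset x ↔ σ.SameCycle x y := by
  simp [orbitFinset]

theorem orbitFinset_eq_iff {x y : α} :
    σ.orbitFinset x = σ.orbitFinset y ↔ σ.SameCycle x y := by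
  refine ⟨fun h => ?_, fun h => Finset.ext fun z => ?_⟩
  · have hx : x ∈ σ.orbitFinset y := h ▸ σ.mem_orbitFinset.2 .rfl
    exact (σ.mem_orbitFinset.1 hx).symm
  · simpa using ⟨h.symm.trans, h.trans⟩

theorem card_orbitFinset (x : α) : #(σ.orbitFinset x) = minimalPeriod σ x := by
  have : σ.orbitFinset x = (range (minimalPeriod σ x)).image (σ^[·] x) := by
    ext y
    simp [sameCycle_iff_exists_iterate_lt]
  rw [this, card_image_of_injOn, card_range]
  simpa using iterate_injOn_Iio_minimalPeriod (f := σ) (x := x)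

def cycles : Finset (Finset α) := univ.image σ.orbitFinset

def cyclesIn (I : Finset ℕ) : Finset (Finset α) := {c ∈ σ.cycles | #c ∈ I}

theorem orbitFinset_eq_iff_mem {c : Finset α} (hc : c ∈ σ.cycles) {x : α} :
    σ.orbitFinset x = c ↔ x ∈ c := by
  obtain ⟨y, -, rfl⟩ := mem_image.1 hc
  simp [orbitFinset_eq_iff, sameCycle_comm]

theorem card_pos_of_mem_cycles {c : Finset α} (hc : c ∈ σ.cycles) : 0 < #c := by
  obtain ⟨x, -, rfl⟩ := mem_image.1 hc
  exact σ.card_orbitFinset x ▸ σ.minimalPeriod_pos x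

theorem card_filter_minimalPeriod_eq (j : ℕ) :
    #{x | minimalPeriod σ x = j} = j * #{c ∈ σ.cycles | #c = j} := by
  rw [card_eq_sum_card_fiberwise (f := σ.orbitFinset) (t := {c ∈ σ.cycles | #c = j}),
    sum_const_nat, mul_comm]
  · intro c hc
    rw [mem_filter] at hc
    rw [← hc.2, filter_filter]
    calc #{x | minimalPeriod σ x = #c ∧ σ.orbitFinset x = c} = #{x | σ.orbitFinset x = c} :=
          congrArg card <| filter_congr fun x _ =>
            ⟨And.right, fun h => ⟨by rw [← h, card_orbitFinset], h⟩⟩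
      _ = #c := congrArg card (by ext x; simp [σ.orbitFinset_eq_iff_mem hc.1])
  · intro x hx
    simp_all [cycles, card_orbitFinset]

section Markings

variable {ι : Type*}

noncomputable def markings [Fintype ι] [DecidableEq ι] (L : ι → Finset ℕ) : Finset (ι → α) :=
  {x | (∀ i, minimalPeriod σ (x i) ∈ L i) ∧ Injective (σ.orbitFinset ∘ x)}

variable {σ} {x : ι → α} {j : ι → ℕ}

theorem cycleListing_injective (hj : ∀ i, minimalPeriod σ (x i) = j i)
    (hx : Injective (σ.orbitFinset ∘ x)) : Injective (σ.cycleListing x j) := by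
  rintro ⟨i, r⟩ ⟨i', r'⟩ h
  simp only [cycleListing] at h
  obtain rfl : i = i' := hx <| σ.orbitFinset_eq_iff.2 <|
    (σ.sameCycle_iterate (x i) r).trans (h ▸ (σ.sameCycle_iterate (x i') r').symm)
  have hr : (r : ℕ) ∈ Set.Iio (minimalPeriod σ (x i)) := by rw [Set.mem_Iio, hj]; exact r.2
  have hr' : (r' : ℕ) ∈ Set.Iio (minimalPeriod σ (x i)) := by rw [Set.mem_Iio, hj]; exact r'.2
  rw [Fin.ext (iterate_injOn_Iio_minimalPeriod hr hr' h)]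

variable [Fintype ι]

variable (σ x j) in
def markedSupport : Finset α := univ.image (σ.cycleListing x j)

theorem mem_markedSupport (hj : ∀ i, minimalPeriod σ (x i) = j i) {y : α} :
    y ∈ σ.markedSupport x j ↔ ∃ i, σ.SameCycle (x i) y := by
  simp only [markedSupport, mem_image, mem_univ, true_and, sameCycle_iff_exists_iterate_lt, hj]
  exact ⟨fun ⟨⟨i, r⟩, h⟩ => ⟨i, r, r.2, h⟩, fun ⟨i, r, hr, h⟩ => ⟨⟨i, r, hr⟩, h⟩⟩

theorem apply_mem_markedSupport_iff (hj : ∀ i, minimalPeriod σ (x i) = j i) {y : α} :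
    σ y ∈ σ.markedSupport x j ↔ y ∈ σ.markedSupport x j := by
  simp only [mem_markedSupport hj, sameCycle_apply_right]

theorem card_compl_markedSupport (hj : ∀ i, minimalPeriod σ (x i) = j i)
    (hx : Injective (σ.orbitFinset ∘ x)) :
    #(σ.markedSupport x j)ᶜ = Fintype.card α - ∑ i, j i := by
  rw [card_compl, markedSupport, card_image_of_injective _ (cycleListing_injective hj hx),
    card_univ, Fintype.card_sigma]
  simp

theorem eq_of_cycleListing_eq {σ' : Perm α} {x' : ι → α}
    (hj : ∀ i, minimalPeriod σ (x i) = j i) (hj' : ∀ i, minimalPeriod σ' (x' i) = j i)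
    (hl : σ.cycleListing x j = σ'.cycleListing x' j)
    (hc : ∀ y ∉ σ.markedSupport x j, σ y = σ' y) : σ = σ' ∧ x = x' := by
  refine ⟨Equiv.ext fun y => ?_, funext fun i => ?_⟩
  · by_cases hy : y ∈ σ.markedSupport x j
    · obtain ⟨⟨i, r⟩, -, rfl⟩ := mem_image.1 hy
      rw [apply_cycleListing i r (hj i), hl, apply_cycleListing i r (hj' i)]
    · exact hc y hy
  · have hi : 0 < j i := hj i ▸ σ.minimalPeriod_pos (x i)
    simpa [cycleListing] using congrFun hl ⟨i, 0, hi⟩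

noncomputable def markingCode (hj : ∀ i, minimalPeriod σ (x i) = j i)
    (hx : Injective (σ.orbitFinset ∘ x)) :
    (Σ i, Fin (j i)) ⊕ Fin (Fintype.card α - ∑ i, j i) ↪ α where
  toFun := Sum.elim (σ.cycleListing x j) fun t =>
    σ (((σ.markedSupport x j)ᶜ.equivFinOfCardEq (card_compl_markedSupport hj hx)).symm t)
  inj' := by
    set e := ((σ.markedSupport x j)ᶜ.equivFinOfCardEq (card_compl_markedSupport hj hx)).symm
    have hcompl : ∀ t, σ (e t) ∉ σ.markedSupport x j := fun t => by
      rw [apply_mem_markedSupport_iff hj]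
      exact mem_compl.1 (e t).2
    have hlist : ∀ q, σ.cycleListing x j q ∈ σ.markedSupport x j :=
      fun q => mem_image_of_mem _ (mem_univ q)
    rintro (q | t) (q' | t') h <;> simp only [Sum.elim_inl, Sum.elim_inr] at h
    · rw [cycleListing_injective hj hx h]
    · exact absurd (h ▸ hlist q) (hcompl t')
    · exact absurd (h ▸ hlist q') (hcompl t)
    · rw [e.injective (Subtype.val_injective (σ.injective h))]

theorem eq_of_markingCode_eq {σ' : Perm α} {x' : ι → α}
    {hj : ∀ i, minimalPeriod σ (x i) = j i} {hx : Injective (σ.orbitFinset ∘ x)}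
    {hj' : ∀ i, minimalPeriod σ' (x' i) = j i} {hx' : Injective (σ'.orbitFinset ∘ x')}
    (h : markingCode hj hx = markingCode hj' hx') : σ = σ' ∧ x = x' := by
  have hl : σ.cycleListing x j = σ'.cycleListing x' j :=
    funext fun q => DFunLike.congr_fun h (Sum.inl q)
  have hR : σ.markedSupport x j = σ'.markedSupport x' j := by simp only [markedSupport, hl]
  refine eq_of_cycleListing_eq hj hj' hl fun y hy => ?_
  have key : ∀ (s s' : Finset α) (hs : s = s') {c : ℕ} (h : #s = c) (h' : #s' = c)
      (t : Fin c), ((s.equivFinOfCardEq h).symm t : α) = (s'.equivFinOfCardEq h').symm t := by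
    rintro s _ rfl c h h' t
    rfl
  have := DFunLike.congr_fun h <| Sum.inr <|
    (σ.markedSupport x j)ᶜ.equivFinOfCardEq (card_compl_markedSupport hj hx) ⟨y, mem_compl.2 hy⟩
  simp only [markingCode, Embedding.coeFn_mk, Sum.elim_inr, Equiv.symm_apply_apply] at this
  rwa [← key _ _ (congrArg compl hR) (card_compl_markedSupport hj hx),
    Equiv.symm_apply_apply] at this

variable [DecidableEq ι]

variable (σ) in
theorem sum_markings_prod_inv_minimalPeriod (I : Finset ℕ) :
    ∑ x ∈ σ.markings fun _ : ι => I, ∏ i, (1 : ℝ) / minimalPeriod σ (x i) =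
      (#(σ.cyclesIn I)).descFactorial (Fintype.card ι) := by
  have hmaps : ∀ x ∈ σ.markings fun _ : ι => I,
      σ.orbitFinset ∘ x ∈ {c ∈ Fintype.piFinset fun _ : ι => σ.cyclesIn I | Injective c} := by
    intro x hx
    simp only [markings, mem_filter, mem_univ, true_and] at hx
    simp [hx.2, cyclesIn, cycles, card_orbitFinset, hx.1]
  rw [← card_filter_piFinset_injective, ← sum_fiberwise_of_maps_to hmaps, card_eq_sum_ones,
    Nat.cast_sum]
  refine sum_congr rfl fun c hc => ?_
  simp only [mem_filter, Fintype.mem_piFinset, cyclesIn] at hc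
  have hfiber : {x ∈ σ.markings fun _ : ι => I | σ.orbitFinset ∘ x = c} =
      Fintype.piFinset c := by
    ext x
    simp only [markings, mem_filter, mem_univ, true_and, Fintype.mem_piFinset]
    refine ⟨fun ⟨_, hx⟩ i => hx ▸ σ.mem_orbitFinset.2 .rfl, fun hx => ?_⟩
    have horb : σ.orbitFinset ∘ x = c :=
      funext fun i => (σ.orbitFinset_eq_iff_mem (hc.1 i).1).2 (hx i)
    refine ⟨⟨fun i => ?_, horb ▸ hc.2⟩, horb⟩
    rw [← card_orbitFinset, ← comp_apply (f := σ.orbitFinset), horb]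
    exact (hc.1 i).2
  rw [hfiber, ← prod_univ_sum c fun _ y => (1 : ℝ) / minimalPeriod σ y, Nat.cast_one]
  refine prod_eq_one fun i _ => ?_
  have hci := (hc.1 i).1
  rw [sum_congr rfl fun y hy => by rw [← card_orbitFinset, (σ.orbitFinset_eq_iff_mem hci).2 hy],
    sum_const, nsmul_eq_mul, mul_one_div_cancel]
  exact_mod_cast (σ.card_pos_of_mem_cycles hci).ne'

variable (σ) in
theorem sum_markings_prod_inv_minimalPeriod_le (I : Finset ℕ) :
    ∑ x ∈ σ.markings fun _ : ι => I, ∏ i, (1 : ℝ) / minimalPeriod σ (x i) ≤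
      ∑ j ∈ Fintype.piFinset fun _ : ι => I,
        #(σ.markings fun i => {j i}) * ∏ i, (1 : ℝ) / j i := by
  rw [← sum_fiberwise_of_maps_to (g := fun x i => minimalPeriod σ (x i))
    (t := Fintype.piFinset fun _ : ι => I)
    fun x hx => Fintype.mem_piFinset.2 (mem_filter.1 hx).2.1]
  refine sum_le_sum fun j _ => ?_
  have hw : ∀ x ∈ {x ∈ σ.markings fun _ : ι => I | (fun i => minimalPeriod σ (x i)) = j},
      ∏ i, (1 : ℝ) / minimalPeriod σ (x i) = ∏ i, (1 : ℝ) / j i :=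
    fun x hx => by rw [← (mem_filter.1 hx).2]
  rw [sum_congr rfl hw, sum_const, nsmul_eq_mul]
  gcongr
  intro x hx
  simp only [markings, mem_filter, mem_univ, true_and, mem_singleton] at hx ⊢
  exact ⟨fun i => congrFun hx.2 i, hx.1.2⟩

variable (j) in
theorem sum_card_markings_le :
    ∑ σ : Perm α, #(σ.markings fun i => {j i}) ≤ (Fintype.card α).factorial := by
  let Marked := Σ σ : Perm α,
    {x : ι → α // (∀ i, minimalPeriod σ (x i) = j i) ∧ Injective (σ.orbitFinset ∘ x)}
  have hinj : Injective fun p : Marked => markingCode p.2.2.1 p.2.2.2 := by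
    rintro ⟨σ, x, hj, hx⟩ ⟨σ', x', hj', hx'⟩ h
    obtain ⟨rfl, rfl⟩ := eq_of_markingCode_eq h
    rfl
  calc _ = Fintype.card Marked := by
        simp [Marked, markings, Fintype.card_sigma, Fintype.card_subtype]
    _ ≤ _ := Fintype.card_le_of_injective _ hinj
    _ ≤ _ := by rw [Fintype.card_embedding_eq]; exact Nat.descFactorial_le_factorial _ _

variable (ι) in
theorem sum_descFactorial_card_cyclesIn_le (I : Finset ℕ) :
    ∑ σ : Perm α, ((#(σ.cyclesIn I)).descFactorial (Fintype.card ι) : ℝ) ≤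
      (Fintype.card α).factorial * (∑ j ∈ I, (1 : ℝ) / j) ^ Fintype.card ι := by
  calc ∑ σ : Perm α, ((#(σ.cyclesIn I)).descFactorial (Fintype.card ι) : ℝ)
      ≤ ∑ σ : Perm α, ∑ j ∈ Fintype.piFinset fun _ : ι => I,
          #(σ.markings fun i => {j i}) * ∏ i, (1 : ℝ) / j i := by
        gcongr with σ
        rw [← sum_markings_prod_inv_minimalPeriod]
        exact sum_markings_prod_inv_minimalPeriod_le σ I
    _ = ∑ j ∈ Fintype.piFinset fun _ : ι => I,
          ((∑ σ : Perm α, #(σ.markings fun i => {j i}) : ℕ) : ℝ) * ∏ i, (1 : ℝ) / j i := by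
        rw [sum_comm]
        simp only [Nat.cast_sum, sum_mul]
    _ ≤ ∑ j ∈ Fintype.piFinset fun _ : ι => I,
          ((Fintype.card α).factorial : ℝ) * ∏ i, (1 : ℝ) / j i := by
        gcongr with j
        exact_mod_cast sum_card_markings_le j
    _ = _ := by
        rw [← mul_sum, ← prod_univ_sum (fun _ : ι => I) fun _ j => (1 : ℝ) / j, prod_const,
          card_univ]

end Markings

end Equiv.Perm

theorem cycleCount_eq_card {n : ℕ} (σ : Equiv.Perm (Fin n)) (j : ℕ) :
    cycleCount σ j = #{c ∈ σ.cycles | #c = j} := by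
  rw [cycleCount, σ.card_filter_minimalPeriod_eq]
  rcases Nat.eq_zero_or_pos j with rfl | hj
  · rw [zero_mul, Nat.div_zero, eq_comm, card_eq_zero, filter_eq_empty_iff]
    exact fun c hc => (σ.card_pos_of_mem_cycles hc).ne'
  · exact Nat.mul_div_cancel_left _ hj

theorem cycleCountIn_eq_card {n : ℕ} (σ : Equiv.Perm (Fin n)) (I : Finset ℕ) :
    cycleCountIn σ I = #(σ.cyclesIn I) := by
  rw [cycleCountIn, card_eq_sum_card_fiberwise (s := σ.cyclesIn I) (f := card) (t := I)
    fun c hc => (mem_filter.1 hc).2]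
  refine sum_congr rfl fun j hj => ?_
  rw [cycleCount_eq_card, Equiv.Perm.cyclesIn, filter_filter]
  exact congrArg card (filter_congr fun c _ => ⟨fun h => ⟨h ▸ hj, h⟩, And.right⟩)

theorem tail_bound_factorial_general (n : ℕ) (I : Finset ℕ) (k : ℕ) :
    permP n (fun σ => k ≤ cycleCountIn σ I) ≤ Hset I ^ k / k.factorial := by
  have hmoment := Equiv.Perm.sum_descFactorial_card_cyclesIn_le (α := Fin n) (Fin k) I
  simp only [Fintype.card_fin, ← cycleCountIn_eq_card, Nat.descFactorial_eq_factorial_mul_choose,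
    Nat.cast_mul, ← mul_sum] at hmoment
  have hmarkov := card_filter_le_sum_choose univ (cycleCountIn (n := n) · I) k
  rw [permP, Nat.card_eq_fintype_card, Fintype.card_subtype,
    div_le_div_iff₀ (by positivity) (by positivity)]
  calc (#{σ | k ≤ cycleCountIn σ I} : ℝ) * k.factorial
      ≤ (∑ σ : Equiv.Perm (Fin n), ((cycleCountIn σ I).choose k : ℝ)) * k.factorial := by
        gcongr
        exact_mod_cast hmarkov
    _ ≤ Hset I ^ k * n.factorial := by
        rw [Hset]
        linarith

/-- For a nonempty `I ⊆ [n]` and `k ≥ 0`, `P(C_I(σ) ≥ k) ≤ H(I)^k / k!`. -/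
theorem tail_bound_factorial (n : ℕ) (I : Finset ℕ) (hne : I.Nonempty)
    (hsub : I ⊆ Finset.Icc 1 n) (k : ℕ) :
    permP n (fun σ => k ≤ cycleCountIn σ I) ≤ Hset I ^ k / k.factorial :=
  tail_bound_factorial_general n I k
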